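/- arXiv:1709.06299 — 3 statements merged into one kernel-verified Lean document; each statement's English description precedes it below -/
import Mathlib

section
/- A polyomino P is constructible if and only if it is decomposable; moreover, an ordering t₁, …, t_N of the tiles of P is a valid construction order if and only if its reverse t_N, …, t₁ is a valid decomposition order (i.e., for every i ≥ 2, t_i can be added to {t₁, …, t_{i−1}} if and only if for every i ≥ 2, t_i is removable from {t₁, …, t_i}). -/
/-- Grid points. -/
abbrev Pt := ℤ × ℤ

/-- Two grid points are adjacent if they are at L1-distance 1. -/
def GridAdj (p q : Pt) : Prop := |p.1 - q.1| + |p.2 - q.2| = 1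

/-- A set of grid points is connected in the grid graph. -/
def ConnectedIn (Q : Set Pt) : Prop :=
  ∀ p ∈ Q, ∀ q ∈ Q, Relation.ReflTransGen (fun a b => b ∈ Q ∧ GridAdj a b) p q

/-- A polyomino: a finite nonempty set of grid points whose grid graph is connected. -/
def IsPolyomino (P : Finset Pt) : Prop := P.Nonempty ∧ ConnectedIn ↑P

/-- Northern blocking set of `p` with respect to `Q`. -/
def Nblk (p : Pt) (Q : Set Pt) : Set Pt := {q ∈ Q | p.2 < q.2 ∧ |q.1 - p.1| ≤ 1}
/-- Southern blocking set. -/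
def Sblk (p : Pt) (Q : Set Pt) : Set Pt := {q ∈ Q | q.2 < p.2 ∧ |q.1 - p.1| ≤ 1}
/-- Eastern blocking set. -/
def Eblk (p : Pt) (Q : Set Pt) : Set Pt := {q ∈ Q | p.1 < q.1 ∧ |q.2 - p.2| ≤ 1}
/-- Western blocking set. -/
def Wblk (p : Pt) (Q : Set Pt) : Set Pt := {q ∈ Q | q.1 < p.1 ∧ |q.2 - p.2| ≤ 1}

/-- At least one of the four blocking sets of `p` w.r.t. `Q` is empty. -/
def FreeDir (p : Pt) (Q : Set Pt) : Prop :=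
  Nblk p Q = ∅ ∨ Sblk p Q = ∅ ∨ Eblk p Q = ∅ ∨ Wblk p Q = ∅

/-- A position `p ∉ Q` can be added to `Q`. -/
def CanAdd (p : Pt) (Q : Set Pt) : Prop :=
  p ∉ Q ∧ (∃ q ∈ Q, GridAdj p q) ∧ FreeDir p Q

/-- A list of tiles is a valid construction order. -/
def ConstructibleOrder (l : List Pt) : Prop :=
  ∀ (i : ℕ) (h : i < l.length), 1 ≤ i → CanAdd (l.get ⟨i, h⟩) {x | x ∈ l.take i}

/-- A finite set of tiles is constructible. -/
def Constructible (P : Finset Pt) : Prop :=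
  ∃ l : List Pt, l.Nodup ∧ l.toFinset = P ∧ ConstructibleOrder l

/-- A tile `t ∈ Q` is removable from `Q`. -/
def Removable (t : Pt) (Q : Set Pt) : Prop :=
  t ∈ Q ∧ (Q \ {t} = ∅ ∨ ConnectedIn (Q \ {t})) ∧ FreeDir t (Q \ {t})

/-- A list of tiles is a valid decomposition order. -/
def DecompOrder (l : List Pt) : Prop :=
  ∀ (i : ℕ) (h : i < l.length), Removable (l.get ⟨i, h⟩) {x | x ∈ l.drop i}

/-- A finite set of tiles is decomposable. -/
def Decomposable (P : Finset Pt) : Prop :=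
  ∃ l : List Pt, l.Nodup ∧ l.toFinset = P ∧ DecompOrder l

/-- A polyomino is simple (hole-free) if the complement grid graph is connected. -/
def SimplePoly (P : Finset Pt) : Prop := ConnectedIn {p : Pt | p ∉ P}

/-- The 2×2 square of grid points with lower-left corner `a`. -/
def Square (a : Pt) : Set Pt := {a, (a.1 + 1, a.2), (a.1, a.2 + 1), (a.1 + 1, a.2 + 1)}

/-- A tile `t ∈ P` is convex if some 2×2 square contains `t` and no other point of `P`. -/
def ConvexTile (t : Pt) (P : Finset Pt) : Prop :=
  t ∈ P ∧ ∃ a : Pt, t ∈ Square a ∧ ∀ q ∈ P, q ∈ Square a → q = t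

/-- A tile `t ∈ P` is a cut tile if `P \ {t}` is nonempty and disconnected. -/
def CutTile (t : Pt) (P : Finset Pt) : Prop :=
  t ∈ P ∧ (↑P \ {t} : Set Pt).Nonempty ∧ ¬ ConnectedIn (↑P \ {t})


lemma gridAdj_symm {p q : Pt} (h : GridAdj p q) : GridAdj q p := by
  unfold GridAdj at *; rw [abs_sub_comm, abs_sub_comm q.2]; exact h

lemma gridAdj_ne {p q : Pt} (h : GridAdj p q) : p ≠ q := by
  intro e; subst e; simp [GridAdj] at h

lemma freeDir_empty (p : Pt) : FreeDir p ∅ := by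
  left; ext x; simp [Nblk]

lemma connectedIn_insert {Q : Set Pt} (hQ : ConnectedIn Q) {p q : Pt}
    (hq : q ∈ Q) (hadj : GridAdj p q) : ConnectedIn (insert p Q) := by
  have mono : ∀ a b, Relation.ReflTransGen (fun a b => b ∈ Q ∧ GridAdj a b) a b →
      Relation.ReflTransGen (fun a b => b ∈ insert p Q ∧ GridAdj a b) a b :=
    fun a b h => Relation.ReflTransGen.mono (r := fun a b => b ∈ Q ∧ GridAdj a b) (p := fun a b => b ∈ insert p Q ∧ GridAdj a b) (fun x y hxy => ⟨Set.mem_insert_of_mem _ hxy.1, hxy.2⟩) a b h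
  intro a ha b hb
  rcases ha with rfl | ha
  · rcases hb with rfl | hb
    · exact .refl
    · exact (Relation.ReflTransGen.single ⟨Set.mem_insert_of_mem _ hq, hadj⟩).trans
        (mono _ _ (hQ q hq b hb))
  · rcases hb with rfl | hb
    · exact (mono _ _ (hQ a ha q hq)).trans
        (Relation.ReflTransGen.single ⟨Set.mem_insert _ _, gridAdj_symm hadj⟩)
    · exact mono _ _ (hQ a ha b hb)

lemma exists_adj_of_connected {Q : Set Pt} (hQ : ConnectedIn Q) {t u : Pt}
    (ht : t ∈ Q) (hu : u ∈ Q) (hne : u ≠ t) : ∃ q ∈ Q, q ≠ t ∧ GridAdj t q := by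
  rcases (hQ t ht u hu).cases_head with h | ⟨c, ⟨hcQ, hadj⟩, _⟩
  · exact absurd h.symm hne
  · exact ⟨c, hcQ, (gridAdj_ne hadj).symm, hadj⟩

lemma core_lemma (l : List Pt) (hnd : l.Nodup) (hconn : ConnectedIn {x | x ∈ l}) :
    ConstructibleOrder l ↔ DecompOrder l.reverse := by
  have hni : ∀ i (h : i < l.length), l[i] ∉ l.take i := by
    intro i h hmem
    obtain ⟨j, hj, hje⟩ := List.mem_iff_getElem.mp hmem
    rw [List.getElem_take] at hje
    have hjlt : j < i := by simp [List.length_take] at hj; omega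
    have := (List.Nodup.get_inj_iff hnd (i := ⟨j, by omega⟩) (j := ⟨i, h⟩)).mp (by simpa [List.get_eq_getElem] using hje)
    simp at this; omega
  have hsucc : ∀ i (h : i < l.length),
      {x : Pt | x ∈ l.take (i+1)} = insert l[i] {x : Pt | x ∈ l.take i} := by
    intro i h; ext x
    simp only [List.take_succ, List.getElem?_eq_getElem h, Set.mem_setOf_eq,
      List.mem_append, Option.toList_some, List.mem_singleton, Set.mem_insert_iff]
    tauto
  have hdiff : ∀ i (h : i < l.length),
      {x : Pt | x ∈ l.take (i+1)} \ {l[i]} = {x : Pt | x ∈ l.take i} := by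
    intro i h
    rw [hsucc i h, Set.insert_diff_self_of_notMem]
    exact hni i h
  have hmemsucc : ∀ i (h : i < l.length), (l[i] : Pt) ∈ {x : Pt | x ∈ l.take (i+1)} := by
    intro i h; rw [hsucc i h]; exact Set.mem_insert _ _
  have hpreconn : ConstructibleOrder l → ∀ i, 1 ≤ i → i ≤ l.length →
      ConnectedIn {x : Pt | x ∈ l.take i} := by
    intro co i
    induction i with
    | zero => omega
    | succ n ih =>
      intro _ hle
      rcases Nat.eq_zero_or_pos n with rfl | hn
      · intro p hp q hq
        have h0 : 0 < l.length := by omega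
        have ht1 : l.take (0+1) = [l[0]] := by
          rw [List.take_succ, List.getElem?_eq_getElem h0]; rfl
        rw [ht1] at hp hq
        simp only [Set.mem_setOf_eq, List.mem_singleton] at hp hq
        subst hp; subst hq; exact .refl
      · have hc := ih hn (by omega)
        have hcan := co n (by omega) hn
        simp only [List.get_eq_getElem] at hcan
        obtain ⟨-, ⟨q, hq, hadj⟩, -⟩ := hcan
        rw [hsucc n (by omega)]
        exact connectedIn_insert hc hq hadj
  have hrevget : ∀ j (hj : j < l.reverse.length),
      l.reverse.get ⟨j, hj⟩ = l[l.length - 1 - j]'(by simp at hj; omega) := by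
    intro j hj
    simp [List.get_eq_getElem, List.getElem_reverse]
  have hrevdrop : ∀ j, j ≤ l.length →
      {x : Pt | x ∈ l.reverse.drop j} = {x : Pt | x ∈ l.take (l.length - j)} := by
    intro j hj
    have h1 : (l.take (l.length - j)).reverse = l.reverse.drop j := by
      rw [List.reverse_take]; congr 1; omega
    ext x; rw [← h1]; simp
  constructor
  · intro co j hj
    have hj' : j < l.length := by simpa using hj
    rw [hrevget j hj, hrevdrop j (by omega)]
    set i := l.length - 1 - j with hidef
    have hilt : i < l.length := by omega
    have heq : l.length - j = i + 1 := by omega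
    rw [heq]
    refine ⟨hmemsucc i hilt, ?_, ?_⟩
    · rw [hdiff i hilt]
      rcases Nat.eq_zero_or_pos i with hi0 | hi
      · left; rw [hi0]; ext x; simp
      · right; exact hpreconn co i hi (by omega)
    · rw [hdiff i hilt]
      rcases Nat.eq_zero_or_pos i with hi0 | hi
      · rw [hi0]
        have : {x : Pt | x ∈ l.take 0} = (∅ : Set Pt) := by ext x; simp
        rw [this]; exact freeDir_empty _
      · have := co i hilt hi
        simp only [List.get_eq_getElem] at this
        exact this.2.2
  · intro de i h h1
    have hrem : ∀ k (hk : k < l.length), Removable l[k] {x : Pt | x ∈ l.take (k+1)} := by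
      intro k hk
      have hj : l.length - 1 - k < l.reverse.length := by simp; omega
      have hd := de (l.length - 1 - k) hj
      rw [hrevget _ hj, hrevdrop _ (by omega)] at hd
      have e1 : l.length - 1 - (l.length - 1 - k) = k := by omega
      have e2 : l.length - (l.length - 1 - k) = k + 1 := by omega
      rw [e2] at hd
      convert hd using 2
      omega
    simp only [List.get_eq_getElem]
    have hfree := (hrem i h).2.2
    rw [hdiff i h] at hfree
    refine ⟨fun hc => hni i h hc, ?_, hfree⟩
    have hconn' : ConnectedIn {x : Pt | x ∈ l.take (i+1)} := by
      rcases eq_or_lt_of_le (show i+1 ≤ l.length from h) with he | hlt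
      · have : l.take (i+1) = l := by rw [he, List.take_length]
        rw [this]; exact hconn
      · have h2 := (hrem (i+1) hlt).2.1
        rw [hdiff (i+1) hlt] at h2
        rcases h2 with hemp | hc
        · exact absurd (hemp ▸ hmemsucc i h) (Set.notMem_empty _)
        · exact hc
    have h0lt : 0 < l.length := by omega
    have h0mem : (l[0] : Pt) ∈ {x : Pt | x ∈ l.take (i+1)} := by
      have hl : 0 < (l.take (i+1)).length := by simp [List.length_take]; omega
      have : (l.take (i+1))[0] = l[0] := List.getElem_take
      exact this ▸ List.getElem_mem hl
    have hne : (l[0] : Pt) ≠ l[i] := by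
      intro he
      have := (List.Nodup.get_inj_iff hnd (i := ⟨0, h0lt⟩) (j := ⟨i, h⟩)).mp
        (by simpa [List.get_eq_getElem] using he)
      simp at this; omega
    obtain ⟨q, hqmem, hqne, hqadj⟩ :=
      exists_adj_of_connected hconn' (hmemsucc i h) h0mem hne
    refine ⟨q, ?_, hqadj⟩
    rw [hsucc i h] at hqmem
    rcases hqmem with rfl | hq
    · exact absurd rfl hqne
    · exact hq

/-- A polyomino is constructible iff it is decomposable; an ordering of its
tiles is a valid construction order iff its reverse is a valid decomposition order. -/
theorem tap_construction_iff_decomposition (P : Finset Pt) (hP : IsPolyomino P) :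
    (Constructible P ↔ Decomposable P) ∧
      ∀ l : List Pt, l.Nodup → l.toFinset = P →
        (ConstructibleOrder l ↔ DecompOrder l.reverse) := by
  have main : ∀ l : List Pt, l.Nodup → l.toFinset = P →
      (ConstructibleOrder l ↔ DecompOrder l.reverse) := by
    intro l hnd htf
    apply core_lemma l hnd
    have : {x : Pt | x ∈ l} = (↑P : Set Pt) := by
      ext x; simp [← htf]
    rw [this]; exact hP.2
  refine ⟨⟨?_, ?_⟩, main⟩
  · rintro ⟨l, hnd, htf, hco⟩
    exact ⟨l.reverse, (List.nodup_reverse.mpr hnd), by simpa using htf, (main l hnd htf).mp hco⟩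
  · rintro ⟨l, hnd, htf, hde⟩
    refine ⟨l.reverse, (List.nodup_reverse.mpr hnd), by simpa using htf, ?_⟩
    exact (main l.reverse (List.nodup_reverse.mpr hnd) (by simpa using htf)).mpr
      (by simpa [List.reverse_reverse] using hde)
end

section
/- Every polyomino with at least two tiles has at least two convex tiles. -/
/-- Every polyomino with at least two tiles has at least two convex tiles. -/
theorem tap_two_convex_tiles (P : Finset Pt) (hP : IsPolyomino P) (hcard : 2 ≤ P.card) :
    ∃ t t' : Pt, t ≠ t' ∧ ConvexTile t P ∧ ConvexTile t' P := by
  classical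
  set k : Pt → ℤ ×ₗ ℤ := fun p => toLex (p.2, p.1) with hk
  have kinj : Function.Injective k := by
    intro a b h
    have := toLex.injective h
    exact Prod.ext (congrArg Prod.snd this) (congrArg Prod.fst this)
  set Q : Finset (ℤ ×ₗ ℤ) := P.image k with hQ
  have hQcard : Q.card = P.card := Finset.card_image_of_injective _ kinj
  have hQne : Q.Nonempty := by
    rw [← Finset.card_pos, hQcard]; omega
  have hlt : Q.min' hQne < Q.max' hQne :=
    Finset.min'_lt_max'_of_card Q (by omega)
  obtain ⟨t, htP, htk⟩ := Finset.mem_image.mp (Q.max'_mem hQne)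
  obtain ⟨t', ht'P, ht'k⟩ := Finset.mem_image.mp (Q.min'_mem hQne)
  have htne : t ≠ t' := by
    intro h; rw [h, ht'k] at htk; exact absurd htk (ne_of_lt hlt)
  refine ⟨t, t', htne, ⟨htP, t, ?_, ?_⟩, ⟨ht'P, (t'.1 - 1, t'.2 - 1), ?_, ?_⟩⟩
  · simp [Square]
  · intro q hq hqsq
    have hle : k q ≤ Q.max' hQne := Q.le_max' _ (Finset.mem_image_of_mem k hq)
    rw [← htk, hk] at hle
    simp only [Square, Set.mem_insert_iff, Set.mem_singleton_iff] at hqsq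
    rcases hqsq with h | h | h | h
    · exact h
    all_goals (exfalso; rw [h] at hle; rw [Prod.Lex.le_iff] at hle; simp at hle <;> omega)
  · simp only [Square, Set.mem_insert_iff, Set.mem_singleton_iff]
    right; right; right
    exact Prod.ext (by simp) (by simp)
  · intro q hq hqsq
    have hle : Q.min' hQne ≤ k q := Q.min'_le _ (Finset.mem_image_of_mem k hq)
    rw [← ht'k, hk] at hle
    simp only [Square, Set.mem_insert_iff, Set.mem_singleton_iff] at hqsq
    rcases hqsq with h | h | h | h
    · exfalso; rw [h] at hle; rw [Prod.Lex.le_iff] at hle; simp at hle <;> omega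
    · exfalso; rw [h] at hle; rw [Prod.Lex.le_iff] at hle; simp at hle <;> omega
    · exfalso; rw [h] at hle; rw [Prod.Lex.le_iff] at hle; simp at hle <;> omega
    · rw [h]; exact Prod.ext (by simp) (by simp)
end

section
/- Let P be a polyomino with N tiles whose bounding box has width w (number of columns) and height h (number of rows). Then the grid graph G_P contains a simple path with at least max(w, h) vertices, and max(w, h) ≥ √N; in particular, G_P contains a simple path with at least ⌈√N⌉ vertices. -/
def polyGraph (P : Finset Pt) : SimpleGraph Pt where
  Adj p q := p ∈ P ∧ q ∈ P ∧ GridAdj p q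
  symm := by
    constructor
    rintro p q ⟨hp, hq, hadj⟩
    refine ⟨hq, hp, ?_⟩
    unfold GridAdj at *
    rw [abs_sub_comm q.1 p.1, abs_sub_comm q.2 p.2]
    exact hadj
  loopless := by constructor; rintro p ⟨-, -, hadj⟩; simp [GridAdj] at hadj

lemma reach_aux (P : Finset Pt) {p q : Pt}
    (h : Relation.ReflTransGen (fun a b => b ∈ (↑P : Set Pt) ∧ GridAdj a b) p q)
    (hp : p ∈ P) : (polyGraph P).Reachable p q ∧ q ∈ P := by
  induction h with
  | refl => exact ⟨SimpleGraph.Reachable.refl _, hp⟩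
  | tail h₁ h₂ ih =>
    exact ⟨ih.1.trans (SimpleGraph.Adj.reachable ⟨ih.2, h₂.1, h₂.2⟩), h₂.1⟩

lemma support_mem (P : Finset Pt) {u v : Pt} (wk : (polyGraph P).Walk u v) (hu : u ∈ P) :
    ∀ x ∈ wk.support, x ∈ P := by
  induction wk with
  | nil => simpa using hu
  | cons h p ih =>
    intro x hx
    rw [SimpleGraph.Walk.support_cons, List.mem_cons] at hx
    rcases hx with rfl | hx
    · exact hu
    · exact ih h.2.1 x hx

lemma list_ivt : ∀ (a : ℤ) (l : List ℤ),
    (a :: l).Chain' (fun p q => |q - p| ≤ 1) → ∀ x : ℤ, a ≤ x →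
    (∃ b ∈ a :: l, x ≤ b) → x ∈ a :: l := by
  intro a l
  induction l generalizing a with
  | nil =>
    rintro _ x hax ⟨b, hb, hxb⟩
    simp only [List.mem_singleton] at hb
    subst hb
    simp [le_antisymm hax hxb]
  | cons c t ih =>
    rintro hc x hax ⟨b, hb, hxb⟩
    rcases eq_or_lt_of_le hax with rfl | hlt
    · exact List.mem_cons_self
    · have hchain : (c :: t).Chain' (fun p q => |q - p| ≤ 1) := hc.tail
      have hca : |c - a| ≤ 1 := (List.isChain_cons_cons.mp hc).1
      have hcx : c ≤ x := by
        have := abs_le.mp hca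
        omega
      have hb' : b ∈ c :: t := by
        rcases List.mem_cons.mp hb with rfl | hb'
        · omega
        · exact hb'
      exact List.mem_cons_of_mem _ (ih c hchain x hcx ⟨b, hb', hxb⟩)

/-- main helper: a path whose length is at least the extent in direction `f`. -/
lemma long_path (P : Finset Pt) (hne : P.Nonempty)
    (hconn : ∀ p ∈ P, ∀ q ∈ P, Relation.ReflTransGen (fun a b => b ∈ (↑P : Set Pt) ∧ GridAdj a b) p q)
    (f : Pt → ℤ) (hf : ∀ p q : Pt, GridAdj p q → |f q - f p| ≤ 1) :
    ∃ l : List Pt, l.Nodup ∧ (∀ x ∈ l, x ∈ P) ∧ l.Chain' GridAdj ∧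
      ((P.image f).max' (hne.image f) - (P.image f).min' (hne.image f) + 1).toNat ≤ l.length := by
  set m := (P.image f).min' (hne.image f) with hm
  set M := (P.image f).max' (hne.image f) with hM
  obtain ⟨pmin, hpmin, hfmin⟩ := Finset.mem_image.mp ((P.image f).min'_mem (hne.image f))
  obtain ⟨pmax, hpmax, hfmax⟩ := Finset.mem_image.mp ((P.image f).max'_mem (hne.image f))
  obtain ⟨hr, -⟩ := reach_aux P (hconn pmin hpmin pmax hpmax) hpmin
  obtain ⟨wk⟩ := hr
  set pth := wk.toPath with hpth
  have hchainP : pth.1.support.Chain' GridAdj :=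
    List.IsChain.imp (fun a b hab => hab.2.2) pth.1.isChain_adj_support
  refine ⟨pth.1.support, pth.2.support_nodup, support_mem P pth.1 hpmin, hchainP, ?_⟩
  have hlen : (pth.1.support.map f).toFinset.card ≤ pth.1.support.length := by
    calc (pth.1.support.map f).toFinset.card ≤ (pth.1.support.map f).length :=
          List.toFinset_card_le _
      _ = pth.1.support.length := List.length_map _
  have hsub : Finset.Icc m M ⊆ (pth.1.support.map f).toFinset := by
    intro x hx
    rw [Finset.mem_Icc] at hx
    rw [List.mem_toFinset]
    have hct : pth.1.support = pmin :: pth.1.support.tail := pth.1.support_eq_cons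
    have hchain : (pth.1.support.map f).Chain' (fun p q => |q - p| ≤ 1) := by
      refine (List.isChain_map f).mpr ?_
      exact List.IsChain.imp (fun a b hab => hf a b hab) hchainP
    have hmem : f pmax ∈ pth.1.support.map f := List.mem_map_of_mem (f := f) pth.1.end_mem_support
    rw [hct] at hchain hmem ⊢
    simp only [List.map_cons] at hchain hmem ⊢
    exact list_ivt (f pmin) (pth.1.support.tail.map f) hchain x (by rw [hfmin]; exact hx.1)
      ⟨f pmax, hmem, by rw [hfmax]; exact hx.2⟩
  calc (M - m + 1).toNat = (M + 1 - m).toNat := by omega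
    _ = (Finset.Icc m M).card := (Int.card_Icc m M).symm
    _ ≤ (pth.1.support.map f).toFinset.card := Finset.card_le_card hsub
    _ ≤ pth.1.support.length := hlen


/-- A polyomino with `N` tiles and bounding box of width `w` and height `h`
contains a simple path with at least `max w h ≥ √N` vertices; in particular a simple path
with at least `⌈√N⌉` vertices. -/
theorem tap_long_path_in_polyomino
    (P : Finset Pt) (hP : IsPolyomino P) (N : ℕ) (hN : P.card = N)
    (w h : ℕ)
    (hw : (w : ℤ) = (P.image Prod.fst).max' (hP.1.image Prod.fst) -
                      (P.image Prod.fst).min' (hP.1.image Prod.fst) + 1)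
    (hh : (h : ℤ) = (P.image Prod.snd).max' (hP.1.image Prod.snd) -
                      (P.image Prod.snd).min' (hP.1.image Prod.snd) + 1) :
    (∃ l : List Pt, l.Nodup ∧ (∀ x ∈ l, x ∈ P) ∧ l.Chain' GridAdj ∧
        max w h ≤ l.length) ∧
      Real.sqrt N ≤ (max w h : ℝ) ∧
      ∃ l : List Pt, l.Nodup ∧ (∀ x ∈ l, x ∈ P) ∧ l.Chain' GridAdj ∧
        ⌈Real.sqrt N⌉₊ ≤ l.length := by
  
  obtain ⟨hne, hconn⟩ := hP
  have hf1 : ∀ p q : Pt, GridAdj p q → |Prod.fst q - Prod.fst p| ≤ 1 := by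
    intro p q hadj
    unfold GridAdj at hadj
    rw [abs_sub_comm]
    have := abs_nonneg (p.2 - q.2)
    omega
  have hf2 : ∀ p q : Pt, GridAdj p q → |Prod.snd q - Prod.snd p| ≤ 1 := by
    intro p q hadj
    unfold GridAdj at hadj
    rw [abs_sub_comm]
    have := abs_nonneg (p.1 - q.1)
    omega
  obtain ⟨l1, h1n, h1m, h1c, h1len⟩ := long_path P hne hconn Prod.fst hf1
  obtain ⟨l2, h2n, h2m, h2c, h2len⟩ := long_path P hne hconn Prod.snd hf2
  have hwlen : w ≤ l1.length := by
    have : ((P.image Prod.fst).max' (hne.image Prod.fst) -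
        (P.image Prod.fst).min' (hne.image Prod.fst) + 1).toNat = w := by omega
    omega
  have hhlen : h ≤ l2.length := by
    have : ((P.image Prod.snd).max' (hne.image Prod.snd) -
        (P.image Prod.snd).min' (hne.image Prod.snd) + 1).toNat = h := by omega
    omega
  -- the long path
  have hmain : ∃ l : List Pt, l.Nodup ∧ (∀ x ∈ l, x ∈ P) ∧ l.Chain' GridAdj ∧
      max w h ≤ l.length := by
    rcases le_total w h with hle | hle
    · exact ⟨l2, h2n, h2m, h2c, by rw [max_eq_right hle]; exact hhlen⟩
    · exact ⟨l1, h1n, h1m, h1c, by rw [max_eq_left hle]; exact hwlen⟩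
  -- N ≤ w * h
  have hNwh : N ≤ w * h := by
    have hsub : P ⊆ (P.image Prod.fst) ×ˢ (P.image Prod.snd) := by
      intro p hp
      exact Finset.mem_product.mpr ⟨Finset.mem_image_of_mem _ hp, Finset.mem_image_of_mem _ hp⟩
    have hcw : (P.image Prod.fst).card ≤ w := by
      have hs : P.image Prod.fst ⊆ Finset.Icc ((P.image Prod.fst).min' (hne.image Prod.fst))
          ((P.image Prod.fst).max' (hne.image Prod.fst)) := by
        intro x hx
        exact Finset.mem_Icc.mpr ⟨Finset.min'_le _ _ hx, Finset.le_max' _ _ hx⟩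
      have := Finset.card_le_card hs
      rw [Int.card_Icc] at this
      omega
    have hch : (P.image Prod.snd).card ≤ h := by
      have hs : P.image Prod.snd ⊆ Finset.Icc ((P.image Prod.snd).min' (hne.image Prod.snd))
          ((P.image Prod.snd).max' (hne.image Prod.snd)) := by
        intro x hx
        exact Finset.mem_Icc.mpr ⟨Finset.min'_le _ _ hx, Finset.le_max' _ _ hx⟩
      have := Finset.card_le_card hs
      rw [Int.card_Icc] at this
      omega
    calc N = P.card := hN.symm
      _ ≤ ((P.image Prod.fst) ×ˢ (P.image Prod.snd)).card := Finset.card_le_card hsub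
      _ = (P.image Prod.fst).card * (P.image Prod.snd).card := Finset.card_product _ _
      _ ≤ w * h := Nat.mul_le_mul hcw hch
  have hsqrt : Real.sqrt N ≤ (max w h : ℝ) := by
    have hN2 : (N : ℝ) ≤ (max w h : ℝ) ^ 2 := by
      have : N ≤ max w h * max w h :=
        le_trans hNwh (Nat.mul_le_mul (le_max_left w h) (le_max_right w h))
      have := (Nat.cast_le (α := ℝ)).mpr this
      push_cast at this ⊢
      nlinarith
    calc Real.sqrt N ≤ Real.sqrt ((max w h : ℝ) ^ 2) := Real.sqrt_le_sqrt hN2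
      _ = (max w h : ℝ) := by
          rw [Real.sqrt_sq (by positivity)]
  refine ⟨hmain, hsqrt, ?_⟩
  obtain ⟨l, hn, hm, hc, hlen⟩ := hmain
  refine ⟨l, hn, hm, hc, Nat.ceil_le.mpr ?_⟩
  calc Real.sqrt N ≤ (max w h : ℝ) := hsqrt
    _ ≤ (l.length : ℝ) := by exact_mod_cast Nat.cast_le (α := ℝ) |>.mpr hlen
end
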